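/- arXiv:1609.02838 — 2 statements merged into one kernel-verified Lean document; each statement's English description precedes it below -/
import Mathlib

section
/- Let W be a (0,4)-tensor on a 4-dimensional quaternion-Hermitian vector space (V,g,I₁,I₂,I₃) satisfying W(X,Y,Z,U) = W(Z,U,X,Y) and W(X,Y,IₛZ,IₛU) = W(X,Y,Z,U) for all s and all vectors. If there exists a nonzero vector v ∈ V with W(X,Y,Z,v) = 0 for all X,Y,Z ∈ V, then W = 0. -/
open scoped RealInnerProductSpace

/-- A (0,4)-tensor on a 4-dimensional quaternion-Hermitian space with pair
symmetry and `Iₛ`-invariance in the last two slots which is annihilated by a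
nonzero vector in the last slot vanishes identically. -/
theorem tensor_vanishes_of_annihilating {V : Type*} [NormedAddCommGroup V]
    [InnerProductSpace ℝ V] [FiniteDimensional ℝ V]
    (hdim : Module.finrank ℝ V = 4)
    (I : Fin 3 → V →ₗ[ℝ] V)
    (hsq : ∀ s, I s ∘ₗ I s = -LinearMap.id)
    (h12 : I 0 ∘ₗ I 1 = I 2) (h21 : I 1 ∘ₗ I 0 = -I 2)
    (hiso : ∀ s (X Y : V), ⟪I s X, I s Y⟫ = ⟪X, Y⟫)
    (W : V →ₗ[ℝ] V →ₗ[ℝ] V →ₗ[ℝ] V →ₗ[ℝ] ℝ)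
    (hpair : ∀ X Y Z U : V, W X Y Z U = W Z U X Y)
    (hinv : ∀ s (X Y Z U : V), W X Y (I s Z) (I s U) = W X Y Z U)
    (v : V) (hv : v ≠ 0)
    (hann : ∀ X Y Z : V, W X Y Z v = 0) :
    W = 0 := by
  have hsq' : ∀ s (x : V), I s (I s x) = -x := by
    intro s x
    have := congrFun (congrArg DFunLike.coe (hsq s)) x
    simpa using this
  -- skew-adjointness
  have hskew : ∀ s (x y : V), ⟪I s x, y⟫ = -⟪x, I s y⟫ := by
    intro s x y
    have := hiso s x (I s y)
    rw [hsq' s y] at this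
    simp only [inner_neg_right] at this
    linarith
  have hIne : ∀ s, I s v ≠ 0 := by
    intro s h
    apply hv
    have : I s (I s v) = 0 := by rw [h]; simp
    rw [hsq' s v] at this
    simpa using (neg_eq_zero.mp this)
  have h02 : I 0 (I 1 v) = I 2 v := by
    have := congrFun (congrArg DFunLike.coe h12) v; simpa using this
  have h21' : I 1 (I 0 v) = -(I 2 v) := by
    have := congrFun (congrArg DFunLike.coe h21) v; simpa using this
  have hortho_self : ∀ s, ⟪v, I s v⟫ = 0 := by
    intro s
    have h1 := hskew s v v
    have h2 : ⟪I s v, v⟫ = ⟪v, I s v⟫ := real_inner_comm _ _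
    linarith [h1, h2]
  have ho01 : ⟪I 0 v, I 1 v⟫ = 0 := by
    rw [hskew 0 v (I 1 v), h02, hortho_self 2, neg_zero]
  have ho02 : ⟪I 0 v, I 2 v⟫ = 0 := by
    have hI02 : I 0 (I 2 v) = -(I 1 v) := by
      rw [← h02, hsq' 0 (I 1 v)]
    rw [hskew 0 v (I 2 v), hI02, inner_neg_right, hortho_self 1]
    simp
  have ho12 : ⟪I 1 v, I 2 v⟫ = 0 := by
    have hI12 : I 1 (I 2 v) = I 0 v := by
      have : I 1 (-(I 2 v)) = -(I 0 v) := by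
        rw [← h21', hsq' 1 (I 0 v)]
      simpa using this
    rw [hskew 1 v (I 2 v), hI12, hortho_self 0, neg_zero]
  set b : Fin 4 → V := ![v, I 0 v, I 1 v, I 2 v] with hb
  have hbi : LinearIndependent ℝ b := by
    apply linearIndependent_of_ne_zero_of_inner_eq_zero
    · intro i
      fin_cases i <;> simp [hb, hv, hIne 0, hIne 1, hIne 2]
    · intro i j hij
      have hsym : ∀ x y : V, ⟪x, y⟫ = 0 → ⟪y, x⟫ = 0 := fun x y h => by
        rw [real_inner_comm]; exact h
      fin_cases i <;> fin_cases j <;>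
        first
          | exact absurd rfl hij
          | exact hortho_self 0 | exact hortho_self 1 | exact hortho_self 2
          | exact ho01 | exact ho02 | exact ho12
          | exact hsym _ _ (hortho_self 0) | exact hsym _ _ (hortho_self 1)
          | exact hsym _ _ (hortho_self 2)
          | exact hsym _ _ ho01 | exact hsym _ _ ho02 | exact hsym _ _ ho12
  have hspan : Submodule.span ℝ (Set.range b) = ⊤ :=
    hbi.span_eq_top_of_card_eq_finrank (by simp [hdim])
  -- the functional annihilates all basis vectors
  have key : ∀ X Y Z U : V, W X Y Z U = 0 := by
    intro X Y Z U
    have hIs : ∀ s (X Y Z : V), W X Y Z (I s v) = 0 := by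
      intro s X Y Z
      have h1 : I s (-(I s Z)) = Z := by
        rw [map_neg, hsq' s Z]; simp
      calc W X Y Z (I s v) = W X Y (I s (-(I s Z))) (I s v) := by rw [h1]
        _ = W X Y (-(I s Z)) v := hinv s X Y _ v
        _ = -(W X Y (I s Z) v) := by simp
        _ = 0 := by rw [hann]; simp
    have hU : U ∈ Submodule.span ℝ (Set.range b) := by rw [hspan]; trivial
    induction hU using Submodule.span_induction with
    | mem x hx =>
      obtain ⟨i, rfl⟩ := hx
      fin_cases i
      · exact hann X Y Z
      · exact hIs 0 X Y Z
      · exact hIs 1 X Y Z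
      · exact hIs 2 X Y Z
    | zero => simp
    | add x y _ _ hx hy => simp [hx, hy]
    | smul c x _ hx => simp [hx]
  ext X Y Z U
  simpa using key X Y Z U
end

section
/- Let (M,g) be a Riemannian manifold, φ a smooth function with ∇²φ = h·g for a smooth function h, and suppose the Ricci tensor satisfies Ric = c·g for a constant c (Einstein), with dim M = m. Then dh = -(c/(m-1)) dφ, i.e., grad h = -(c/(m-1)) grad φ. -/
/-!
Differentiating `∇²φ = h g` once more and antisymmetrising gives the Ricci identity
`R(X,Y,Z,grad φ) = -dh(X) g(Y,Z) + dh(Y) g(X,Z)`: the bracket term is again a Hessian term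
by torsion-freeness, and the derivatives of `g` cancel by metric compatibility. Tracing over an
orthonormal frame gives `Ric(X, grad φ) = -(m-1) dh(X)`, while the Einstein condition makes the
left side `c dφ(X)`.
-/

open Finset

section

variable {A VF : Type*} [CommRing A] [AddCommGroup VF]

def curvature (nabla bracket : VF → VF → VF) (X Y Z : VF) : VF :=
  nabla X (nabla Y Z) - nabla Y (nabla X Z) - nabla (bracket X Y) Z

theorem act_sub_left (act : VF → A → A)
    (act_addX : ∀ (X Y : VF) (f : A), act (X + Y) f = act X f + act Y f) (X Y : VF) (f : A) :
    act (X - Y) f = act X f - act Y f :=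
  map_sub (AddMonoidHom.mk' (act · f) (act_addX · · f)) X Y

theorem act_sum_left {ι : Type*} (act : VF → A → A)
    (act_addX : ∀ (X Y : VF) (f : A), act (X + Y) f = act X f + act Y f)
    (s : Finset ι) (X : ι → VF) (f : A) :
    act (∑ i ∈ s, X i) f = ∑ i ∈ s, act (X i) f :=
  map_sum (AddMonoidHom.mk' (act · f) (act_addX · · f)) X s

variable [Module A VF]

def frameGradient {m : ℕ} (act : VF → A → A) (e : Fin m → VF) (φ : A) : VF :=
  ∑ a, act (e a) φ • e a

theorem act_eq_sum_frame {m : ℕ} (g : VF →ₗ[A] VF →ₗ[A] A) (act : VF → A → A)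
    (act_addX : ∀ (X Y : VF) (f : A), act (X + Y) f = act X f + act Y f)
    (act_smulX : ∀ (c : A) (X : VF) (f : A), act (c • X) f = c * act X f)
    (e : Fin m → VF) (e_frame : ∀ X : VF, X = ∑ a, g X (e a) • e a) (W : VF) (f : A) :
    act W f = ∑ a, g W (e a) * act (e a) f := by
  conv_lhs => rw [e_frame W]
  rw [act_sum_left act act_addX]
  exact sum_congr rfl fun a _ => act_smulX _ _ _

theorem metric_frameGradient {m : ℕ} (g : VF →ₗ[A] VF →ₗ[A] A) (act : VF → A → A)
    (act_addX : ∀ (X Y : VF) (f : A), act (X + Y) f = act X f + act Y f)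
    (act_smulX : ∀ (c : A) (X : VF) (f : A), act (c • X) f = c * act X f)
    (e : Fin m → VF) (e_frame : ∀ X : VF, X = ∑ a, g X (e a) • e a) (W : VF) (φ : A) :
    g W (frameGradient act e φ) = act W φ := by
  rw [frameGradient, map_sum, act_eq_sum_frame g act act_addX act_smulX e e_frame W φ]
  exact sum_congr rfl fun a _ => by rw [map_smul, smul_eq_mul, mul_comm]

theorem metric_curvature_add_metric_curvature_eq_zero (g : VF →ₗ[A] VF →ₗ[A] A)
    (act : VF → A → A)
    (act_add : ∀ (X : VF) (f₁ f₂ : A), act X (f₁ + f₂) = act X f₁ + act X f₂)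
    (bracket : VF → VF → VF)
    (bracket_act : ∀ (X Y : VF) (f : A), act (bracket X Y) f = act X (act Y f) - act Y (act X f))
    (nabla : VF → VF → VF)
    (metric_compat : ∀ X Y Z : VF, act X (g Y Z) = g (nabla X Y) Z + g Y (nabla X Z))
    (X Y Z W : VF) :
    g (curvature nabla bracket X Y Z) W + g Z (curvature nabla bracket X Y W) = 0 := by
  have second_derivative : ∀ X Y : VF, act X (act Y (g Z W)) =
      g (nabla X (nabla Y Z)) W + g (nabla Y Z) (nabla X W)
        + g (nabla X Z) (nabla Y W) + g Z (nabla X (nabla Y W)) := fun X Y => by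
    rw [metric_compat Y Z W, act_add, metric_compat X (nabla Y Z) W, metric_compat X Z (nabla Y W)]
    ring
  simp only [curvature, map_sub, LinearMap.sub_apply]
  linear_combination second_derivative Y X - second_derivative X Y
    + metric_compat (bracket X Y) Z W - bracket_act X Y (g Z W)

theorem curvature_of_conformal_hessian (g : VF →ₗ[A] VF →ₗ[A] A) (act : VF → A → A)
    (act_add : ∀ (X : VF) (f₁ f₂ : A), act X (f₁ + f₂) = act X f₁ + act X f₂)
    (act_leibniz : ∀ (X : VF) (f₁ f₂ : A), act X (f₁ * f₂) = act X f₁ * f₂ + f₁ * act X f₂)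
    (act_addX : ∀ (X Y : VF) (f : A), act (X + Y) f = act X f + act Y f)
    (bracket : VF → VF → VF)
    (bracket_act : ∀ (X Y : VF) (f : A), act (bracket X Y) f = act X (act Y f) - act Y (act X f))
    (nabla : VF → VF → VF) (torsion_free : ∀ X Y : VF, nabla X Y - nabla Y X = bracket X Y)
    (metric_compat : ∀ X Y Z : VF, act X (g Y Z) = g (nabla X Y) Z + g Y (nabla X Z))
    (φ h : A) (hhess : ∀ X Y : VF, act X (act Y φ) - act (nabla X Y) φ = h * g X Y)
    (X Y Z : VF) :
    act X h * g Y Z - act Y h * g X Z = -act (curvature nabla bracket X Y Z) φ := by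
  have third_derivative : ∀ X Y : VF, act X (act Y (act Z φ)) =
      act (nabla X (nabla Y Z)) φ + h * g X (nabla Y Z)
        + (act X h * g Y Z + h * (g (nabla X Y) Z + g Y (nabla X Z))) := fun X Y => by
    rw [eq_add_of_sub_eq (hhess Y Z), act_add, eq_add_of_sub_eq (hhess X (nabla Y Z)),
      act_leibniz, metric_compat]
    ring
  have bracket_term : act (bracket X Y) (act Z φ) =
      act (nabla (bracket X Y) Z) φ + h * (g (nabla X Y) Z - g (nabla Y X) Z) := by
    rw [eq_add_of_sub_eq (hhess _ Z), ← torsion_free, map_sub, LinearMap.sub_apply]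
    ring
  simp only [curvature, act_sub_left act act_addX]
  linear_combination third_derivative Y X - third_derivative X Y + bracket_term
    - bracket_act X Y (act Z φ)

theorem ricci_frameGradient_of_conformal_hessian {m : ℕ}
    (g : VF →ₗ[A] VF →ₗ[A] A) (gsymm : ∀ X Y : VF, g X Y = g Y X) (act : VF → A → A)
    (act_add : ∀ (X : VF) (f₁ f₂ : A), act X (f₁ + f₂) = act X f₁ + act X f₂)
    (act_leibniz : ∀ (X : VF) (f₁ f₂ : A), act X (f₁ * f₂) = act X f₁ * f₂ + f₁ * act X f₂)
    (act_addX : ∀ (X Y : VF) (f : A), act (X + Y) f = act X f + act Y f)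
    (act_smulX : ∀ (c : A) (X : VF) (f : A), act (c • X) f = c * act X f)
    (bracket : VF → VF → VF)
    (bracket_act : ∀ (X Y : VF) (f : A), act (bracket X Y) f = act X (act Y f) - act Y (act X f))
    (nabla : VF → VF → VF) (torsion_free : ∀ X Y : VF, nabla X Y - nabla Y X = bracket X Y)
    (metric_compat : ∀ X Y Z : VF, act X (g Y Z) = g (nabla X Y) Z + g Y (nabla X Z))
    (e : Fin m → VF) (e_orthonormal : ∀ a b : Fin m, g (e a) (e b) = if a = b then 1 else 0)
    (e_frame : ∀ X : VF, X = ∑ a, g X (e a) • e a)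
    (φ h : A) (hhess : ∀ X Y : VF, act X (act Y φ) - act (nabla X Y) φ = h * g X Y) (X : VF) :
    ∑ a, g (curvature nabla bracket (e a) X (frameGradient act e φ)) (e a) =
      -(((m : A) - 1) * act X h) := by
  have term : ∀ a, g (curvature nabla bracket (e a) X (frameGradient act e φ)) (e a) =
      act (e a) h * g X (e a) - act X h * g (e a) (e a) := fun a => by
    rw [curvature_of_conformal_hessian g act act_add act_leibniz act_addX bracket bracket_act
        nabla torsion_free metric_compat φ h hhess,
      ← metric_frameGradient g act act_addX act_smulX e e_frame, gsymm,
      ← eq_neg_of_add_eq_zero_right (metric_curvature_add_metric_curvature_eq_zero g act act_add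
        bracket bracket_act nabla metric_compat _ _ _ _)]
  have trace_metric : ∑ a, g (e a) (e a) = (m : A) := by simp [e_orthonormal]
  rw [sum_congr rfl fun a _ => term a, sum_sub_distrib, ← mul_sum, trace_metric,
    act_eq_sum_frame g act act_addX act_smulX e e_frame X h]
  simp only [mul_comm (act _ h)]
  ring

end

theorem einstein_conformal_hessian_gradient_general
    {M : Type*} [TopologicalSpace M]
    {VF : Type*} [AddCommGroup VF] [Module C(M, ℝ) VF]
    (g : VF →ₗ[C(M, ℝ)] VF →ₗ[C(M, ℝ)] C(M, ℝ))
    (gsymm : ∀ X Y : VF, g X Y = g Y X)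
    (act : VF → C(M, ℝ) → C(M, ℝ))
    (act_add : ∀ (X : VF) (f₁ f₂ : C(M, ℝ)), act X (f₁ + f₂) = act X f₁ + act X f₂)
    (act_leibniz : ∀ (X : VF) (f₁ f₂ : C(M, ℝ)),
      act X (f₁ * f₂) = act X f₁ * f₂ + f₁ * act X f₂)
    (act_addX : ∀ (X Y : VF) (f : C(M, ℝ)), act (X + Y) f = act X f + act Y f)
    (act_smulX : ∀ (c : C(M, ℝ)) (X : VF) (f : C(M, ℝ)), act (c • X) f = c * act X f)
    (bracket : VF → VF → VF)
    (bracket_act : ∀ (X Y : VF) (f : C(M, ℝ)),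
      act (bracket X Y) f = act X (act Y f) - act Y (act X f))
    (nabla : VF → VF → VF)
    (torsion_free : ∀ X Y : VF, nabla X Y - nabla Y X = bracket X Y)
    (metric_compat : ∀ X Y Z : VF,
      act X (g Y Z) = g (nabla X Y) Z + g Y (nabla X Z))
    (m : ℕ) (hm : 2 ≤ m)
    (e : Fin m → VF)
    (e_orthonormal : ∀ a b : Fin m, g (e a) (e b) = if a = b then 1 else 0)
    (e_frame : ∀ X : VF, X = ∑ a : Fin m, g X (e a) • e a)
    (c : ℝ)
    (einstein : ∀ X Y : VF,
      (∑ a : Fin m, g (nabla (e a) (nabla X Y) - nabla X (nabla (e a) Y)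
          - nabla (bracket (e a) X) Y) (e a)) = c • g X Y)
    (φ h : C(M, ℝ))
    (hhess : ∀ X Y : VF, act X (act Y φ) - act (nabla X Y) φ = h * g X Y) :
    ∀ X : VF, act X h = (-(c / ((m : ℝ) - 1))) • act X φ := by
  intro X
  have traced : ∑ a, g (curvature nabla bracket (e a) X (frameGradient act e φ)) (e a) =
      c • g X (frameGradient act e φ) := einstein X _
  rw [ricci_frameGradient_of_conformal_hessian g gsymm act act_add act_leibniz
      act_addX act_smulX bracket bracket_act nabla torsion_free metric_compat e e_orthonormal
      e_frame φ h hhess, metric_frameGradient g act act_addX act_smulX e e_frame] at traced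
  have hm1 : (m : ℝ) - 1 ≠ 0 := by
    have : (2 : ℝ) ≤ m := by exact_mod_cast hm
    linarith
  have scaled : ((m : ℝ) - 1) • act X h = -c • act X φ := by
    rw [neg_smul, ← traced, neg_neg, Algebra.smul_def, map_sub, map_natCast, map_one]
  rw [← neg_div, div_eq_inv_mul, mul_smul, ← scaled, smul_smul,
    inv_mul_cancel₀ hm1, one_smul]

/-- **Einstein manifolds and conformal Hessians.** If `∇²φ = h·g` on an
`m`-dimensional Einstein manifold with `Ric = c·g`, then
`dh = -(c/(m-1)) dφ`. The Riemannian data is encoded abstractly via vector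
fields `VF` over the ring `C(M,ℝ)` with metric `g`, derivation action `act`,
Lie bracket `bracket`, Levi-Civita connection `nabla` and a global orthonormal
frame `e` (in which the Ricci trace is computed). -/
theorem einstein_conformal_hessian_gradient
    {M : Type*} [TopologicalSpace M] [ConnectedSpace M]
    {VF : Type*} [AddCommGroup VF] [Module C(M, ℝ) VF]
    (g : VF →ₗ[C(M, ℝ)] VF →ₗ[C(M, ℝ)] C(M, ℝ))
    (gsymm : ∀ X Y : VF, g X Y = g Y X)
    (act : VF → C(M, ℝ) → C(M, ℝ))
    (act_add : ∀ (X : VF) (f₁ f₂ : C(M, ℝ)), act X (f₁ + f₂) = act X f₁ + act X f₂)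
    (act_leibniz : ∀ (X : VF) (f₁ f₂ : C(M, ℝ)),
      act X (f₁ * f₂) = act X f₁ * f₂ + f₁ * act X f₂)
    (act_addX : ∀ (X Y : VF) (f : C(M, ℝ)), act (X + Y) f = act X f + act Y f)
    (act_smulX : ∀ (c : C(M, ℝ)) (X : VF) (f : C(M, ℝ)), act (c • X) f = c * act X f)
    (bracket : VF → VF → VF)
    (bracket_act : ∀ (X Y : VF) (f : C(M, ℝ)),
      act (bracket X Y) f = act X (act Y f) - act Y (act X f))
    (nabla : VF → VF → VF)
    (nabla_add₁ : ∀ X Y Z : VF, nabla (X + Y) Z = nabla X Z + nabla Y Z)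
    (nabla_smul₁ : ∀ (f : C(M, ℝ)) (X Y : VF), nabla (f • X) Y = f • nabla X Y)
    (nabla_add₂ : ∀ X Y Z : VF, nabla X (Y + Z) = nabla X Y + nabla X Z)
    (nabla_leibniz : ∀ (X : VF) (f : C(M, ℝ)) (Y : VF),
      nabla X (f • Y) = act X f • Y + f • nabla X Y)
    (torsion_free : ∀ X Y : VF, nabla X Y - nabla Y X = bracket X Y)
    (metric_compat : ∀ X Y Z : VF,
      act X (g Y Z) = g (nabla X Y) Z + g Y (nabla X Z))
    (m : ℕ) (hm : 2 ≤ m)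
    (e : Fin m → VF)
    (e_orthonormal : ∀ a b : Fin m, g (e a) (e b) = if a = b then 1 else 0)
    (e_frame : ∀ X : VF, X = ∑ a : Fin m, g X (e a) • e a)
    (c : ℝ)
    (einstein : ∀ X Y : VF,
      (∑ a : Fin m, g (nabla (e a) (nabla X Y) - nabla X (nabla (e a) Y)
          - nabla (bracket (e a) X) Y) (e a)) = c • g X Y)
    (φ h : C(M, ℝ))
    (hhess : ∀ X Y : VF, act X (act Y φ) - act (nabla X Y) φ = h * g X Y) :
    ∀ X : VF, act X h = (-(c / ((m : ℝ) - 1))) • act X φ :=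
  einstein_conformal_hessian_gradient_general g gsymm act act_add act_leibniz act_addX act_smulX
    bracket bracket_act nabla torsion_free metric_compat m hm e e_orthonormal e_frame c einstein φ h
    hhess
end
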